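/- arXiv:2112.01311 — 5 statements merged into one kernel-verified Lean document; each statement's English description precedes it below -/
import Mathlib

section
/- A discrete Morse function on a finite simplicial complex attains its minimum on a critical 0-simplex. -/
/-!
A vertex `v` of a simplex of minimal value has value at most that simplex, so `{v}` is a
minimum. It is critical: another simplex `τ` of the same value must be a coface of `{v}`,
hence contain a second vertex `w`, and squeezing gives `f {w} = f τ = f {v}`, three distinct
simplices with one value, against the 2-to-1 condition.
-/

/-- A finite abstract simplicial complex on vertex type `V`. -/
structure SComplex (V : Type*) [DecidableEq V] where
  faces : Finset (Finset V)
  nonempty : faces.Nonempty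
  not_empty_mem : ∅ ∉ faces
  down_closed : ∀ σ ∈ faces, ∀ τ : Finset V, τ ⊆ σ → τ ≠ ∅ → τ ∈ faces

/-- A discrete Morse function: weakly increasing on faces, at most 2-to-1,
and equal values only on face/coface pairs. -/
def IsDMF {V : Type*} [DecidableEq V] (K : SComplex V) (f : Finset V → ℝ) : Prop :=
  (∀ σ ∈ K.faces, ∀ τ ∈ K.faces, σ ⊆ τ → f σ ≤ f τ) ∧
  (∀ σ ∈ K.faces, ∀ τ ∈ K.faces, ∀ ρ ∈ K.faces,
      f σ = f τ → f τ = f ρ → σ = τ ∨ τ = ρ ∨ σ = ρ) ∧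
  (∀ σ ∈ K.faces, ∀ τ ∈ K.faces, f σ = f τ → σ ≠ τ → σ ⊂ τ ∨ τ ⊂ σ)

/-- A simplex is critical if no other simplex shares its value. -/
def IsCritical {V : Type*} [DecidableEq V] (K : SComplex V) (f : Finset V → ℝ)
    (σ : Finset V) : Prop :=
  σ ∈ K.faces ∧ ∀ τ ∈ K.faces, f τ = f σ → τ = σ

namespace SComplex

variable {V : Type*} [DecidableEq V] (K : SComplex V)

theorem singleton_mem {σ : Finset V} {v : V} (hσ : σ ∈ K.faces) (hv : v ∈ σ) :
    {v} ∈ K.faces :=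
  K.down_closed σ hσ {v} (Finset.singleton_subset_iff.2 hv) (Finset.singleton_ne_empty v)

theorem not_ssubset_singleton {τ : Finset V} (hτ : τ ∈ K.faces) (v : V) : ¬τ ⊂ {v} :=
  fun h => K.not_empty_mem (Finset.eq_empty_of_ssubset_singleton h ▸ hτ)

theorem exists_singleton_le_of_monotoneOn {f : Finset V → ℝ}
    (hmono : ∀ σ ∈ K.faces, ∀ τ ∈ K.faces, σ ⊆ τ → f σ ≤ f τ) :
    ∃ v, {v} ∈ K.faces ∧ ∀ τ ∈ K.faces, f {v} ≤ f τ := by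
  obtain ⟨σ, hσ, hmin⟩ := K.faces.exists_min_image f K.nonempty
  obtain ⟨v, hv⟩ := Finset.nonempty_iff_ne_empty.2 fun h => K.not_empty_mem (h ▸ hσ)
  have hvσ : {v} ⊆ σ := Finset.singleton_subset_iff.2 hv
  exact ⟨v, K.singleton_mem hσ hv,
    fun τ hτ => (hmono _ (K.singleton_mem hσ hv) _ hσ hvσ).trans (hmin τ hτ)⟩

end SComplex

theorem IsDMF.isCritical_singleton_of_le {V : Type*} [DecidableEq V] {K : SComplex V}
    {f : Finset V → ℝ} (hf : IsDMF K f) {v : V} (hv : {v} ∈ K.faces)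
    (hmin : ∀ τ ∈ K.faces, f {v} ≤ f τ) : IsCritical K f {v} := by
  obtain ⟨hmono, htwo, hface⟩ := hf
  refine ⟨hv, fun τ hτ hfτ => by_contra fun hne => ?_⟩
  have hsub : {v} ⊂ τ :=
    (hface _ hv _ hτ hfτ.symm (Ne.symm hne)).resolve_right (K.not_ssubset_singleton hτ v)
  obtain ⟨w, hwτ, hwv⟩ := Finset.exists_of_ssubset hsub
  have hw : {w} ∈ K.faces := K.singleton_mem hτ hwτ
  have hfw : f {w} = f τ :=
    le_antisymm (hmono _ hw _ hτ (Finset.singleton_subset_iff.2 hwτ)) (hfτ ▸ hmin _ hw)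
  rcases htwo _ hv _ hτ _ hw hfτ.symm hfw.symm with h | h | h
  · exact hne h.symm
  · have hvw : v ∈ ({w} : Finset V) := h ▸ hsub.subset (Finset.mem_singleton_self v)
    exact hwv (Finset.mem_singleton.2 (Finset.mem_singleton.1 hvw).symm)
  · exact hwv (h ▸ Finset.mem_singleton_self w)

/-- A discrete Morse function on a finite simplicial complex attains its
minimum on a critical 0-simplex. -/
theorem stmt0 {V : Type*} [DecidableEq V] (K : SComplex V) (f : Finset V → ℝ)
    (hf : IsDMF K f) :
    ∃ σ ∈ K.faces, σ.card = 1 ∧ IsCritical K f σ ∧ ∀ τ ∈ K.faces, f σ ≤ f τ := by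
  obtain ⟨v, hv, hmin⟩ := K.exists_singleton_le_of_monotoneOn hf.1
  exact ⟨{v}, hv, Finset.card_singleton v, hf.isCritical_singleton_of_le hv hmin, hmin⟩
end

section
/- The index Morse order on the nodes of a merge tree is a total order. -/
/-- Chirality: left or right. -/
inductive Chir : Type
  | L : Chir
  | R : Chir
  deriving DecidableEq

/-- The opposite chirality. -/
def Chir.other : Chir → Chir
  | .L => .R
  | .R => .L

/-- A merge tree: a full rooted chiral binary tree, encoded by the set of its nodes,
each node being the list of chiralities along the shortest path from the root to it
(the root is the empty list). -/
structure MergeTree : Type where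
  nodes : Finset (List Chir)
  root_mem : [] ∈ nodes
  prefix_closed : ∀ (w : List Chir) (x : Chir), w ++ [x] ∈ nodes → w ∈ nodes
  full : ∀ w : List Chir, w ++ [Chir.L] ∈ nodes ↔ w ++ [Chir.R] ∈ nodes

/-- An inner node: a node with (two) children. -/
def MergeTree.IsInner (T : MergeTree) (n : List Chir) : Prop :=
  n ∈ T.nodes ∧ n ++ [Chir.L] ∈ T.nodes

/-- A leaf node: a node without children. -/
def MergeTree.IsLeaf (T : MergeTree) (n : List Chir) : Prop :=
  n ∈ T.nodes ∧ n ++ [Chir.L] ∉ T.nodes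

/-- The chirality of a node (the root has chirality `L` by convention). -/
def chir (n : List Chir) : Chir := n.getLast?.getD Chir.L

/-- The number of inner nodes of a merge tree. -/
def MergeTree.innerCount (T : MergeTree) : ℕ :=
  (T.nodes.filter fun n => n ++ [Chir.L] ∈ T.nodes).card

/-- Auxiliary comparison of path words; the first argument is the letter at the last
position where the two words agreed (cf. "a_k = b_k"): under a common `L`, the letter
`L` precedes `R`; under a common `R`, `R` precedes `L`; shorter words are larger. -/
def leAux : Chir → List Chir → List Chir → Prop
  | _, _, [] => True
  | _, [], _ :: _ => False
  | last, x :: a, y :: b => if x = y then leAux x a b else x = last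

/-- The sublevel-connected Morse order (comparison of path words; every path word
starts with the letter `L` for the root). -/
def scLe (a b : List Chir) : Prop := leAux Chir.L a b

/-- The index Morse order: leaves below inner nodes; among leaves and among inner
nodes, compare path words. -/
def ioLe (T : MergeTree) (a b : List Chir) : Prop :=
  (T.IsLeaf a ∧ T.IsInner b) ∨
    (((T.IsLeaf a ∧ T.IsLeaf b) ∨ (T.IsInner a ∧ T.IsInner b)) ∧ scLe a b)

/-- The simplex order on the nodes of a merge tree. -/
def simpLe (a b : List Chir) : Prop :=
  a = b ∨ (b ++ [Chir.L]) <+: a ∨ (a ++ [Chir.R]) <+: b ∨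
    ∃ p : List Chir, (p ++ [Chir.L]) <+: a ∧ (p ++ [Chir.R]) <+: b

/-!
Code a path word by its turns: each letter becomes `true` or `false` according as it differs
from the letter before it (the root counting as `L`), and a final `⊤` makes every word larger
than its proper extensions. Comparing path words is then the lexicographic order on these
codes, and the index Morse order is the lexicographic order on the pairs
(has children, code). This is the pullback of a linear order along an injective map.
-/

theorem List.cons_le_cons_iff' {α : Type*} [LinearOrder α] {a b : α} {l m : List α} :
    a :: l ≤ b :: m ↔ a < b ∨ a = b ∧ l ≤ m := by
  rw [le_iff_lt_or_eq, le_iff_lt_or_eq, List.cons_lt_cons_iff, List.cons.injEq]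
  tauto

def turnCode : Chir → List Chir → List (WithTop Bool)
  | _, [] => [⊤]
  | c, x :: a => ((decide (x ≠ c) : Bool) : WithTop Bool) :: turnCode x a

theorem turnCode_injective (c : Chir) : Function.Injective (turnCode c) := by
  intro a b h
  induction a generalizing c b with
  | nil => cases b <;> simp_all [turnCode]
  | cons x a ih =>
    cases b with
    | nil => simp [turnCode] at h
    | cons y b =>
      simp only [turnCode, List.cons.injEq, WithTop.coe_eq_coe] at h
      have hxy : x = y := by cases x <;> cases y <;> cases c <;> simp_all
      subst hxy
      rw [ih x h.2]

theorem leAux_iff_turnCode_le (c : Chir) (a b : List Chir) :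
    leAux c a b ↔ turnCode c a ≤ turnCode c b := by
  induction a generalizing c b with
  | nil => cases b <;> simp [leAux, turnCode, List.cons_le_cons_iff']
  | cons x a ih =>
    cases b with
    | nil => simp [leAux, turnCode, List.cons_le_cons_iff']
    | cons y b =>
      by_cases hxy : x = y
      · subst hxy
        simp [leAux, turnCode, List.cons_le_cons_iff', ih]
      · cases x <;> cases y <;> cases c <;> simp_all [leAux, turnCode, List.cons_le_cons_iff']

def ioKey (T : MergeTree) (a : List Chir) : Bool ×ₗ List (WithTop Bool) :=
  toLex (decide (a ++ [Chir.L] ∈ T.nodes), turnCode Chir.L a)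

theorem ioKey_injective (T : MergeTree) : Function.Injective (ioKey T) :=
  fun _ _ h => turnCode_injective Chir.L (congrArg (·.2) (congrArg ofLex h))

theorem ioLe_iff_ioKey_le {T : MergeTree} {a b : List Chir} (ha : a ∈ T.nodes) (hb : b ∈ T.nodes) :
    ioLe T a b ↔ ioKey T a ≤ ioKey T b := by
  rw [ioKey, ioKey, Prod.Lex.toLex_le_toLex, ← leAux_iff_turnCode_le]
  by_cases hia : a ++ [Chir.L] ∈ T.nodes <;> by_cases hib : b ++ [Chir.L] ∈ T.nodes <;>
    simp [ioLe, scLe, MergeTree.IsLeaf, MergeTree.IsInner, ha, hb, hia, hib]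

/-- The index Morse order on the nodes of a merge tree is a total order:
reflexive, antisymmetric, transitive and total. -/
theorem stmt4 (T : MergeTree) :
    (∀ a ∈ T.nodes, ioLe T a a) ∧
    (∀ a ∈ T.nodes, ∀ b ∈ T.nodes, ioLe T a b → ioLe T b a → a = b) ∧
    (∀ a ∈ T.nodes, ∀ b ∈ T.nodes, ∀ c ∈ T.nodes, ioLe T a b → ioLe T b c → ioLe T a c) ∧
    (∀ a ∈ T.nodes, ∀ b ∈ T.nodes, ioLe T a b ∨ ioLe T b a) := by
  refine ⟨fun a ha => ?_, fun a ha b hb => ?_, fun a ha b hb c hc => ?_, fun a ha b hb => ?_⟩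
  · exact (ioLe_iff_ioKey_le ha ha).2 le_rfl
  · rw [ioLe_iff_ioKey_le ha hb, ioLe_iff_ioKey_le hb ha]
    exact fun hab hba => ioKey_injective T (le_antisymm hab hba)
  · rw [ioLe_iff_ioKey_le ha hb, ioLe_iff_ioKey_le hb hc, ioLe_iff_ioKey_le ha hc]
    exact le_trans
  · rw [ioLe_iff_ioKey_le ha hb, ioLe_iff_ioKey_le hb ha]
    exact le_total _ _
end

section
/- The index Morse order on the nodes of a merge tree is a Morse order: for every subtree T' of T, the restriction of ≤_io to T' attains its maximum at the root of T', and attains its minimum within the subtree rooted at the left (respectively right) child of the root of T' when the root of T' has chirality L (respectively R). -/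
/-!
Within the subtree at `p`, every node extends the path word `p`, and a longer word is smaller
than its prefixes; as a proper prefix is always an inner node, the root `p` is the maximum.
For the minimum, descend from `p` repeatedly to the child of chirality `c = chir p` until a leaf
`m = p ++ cᵏ` is reached. Leaves lie below inner nodes, and a leaf `n = p ++ t` of the subtree
first leaves the word `cᵏ` with a letter different from `c` (it cannot extend the leaf `m`),
which under the governing letter `c` makes it larger than `m`.
-/

lemma leAux_refl : ∀ (last : Chir) (a : List Chir), leAux last a a
  | _, [] => trivial
  | _, x :: a => by simpa only [leAux, ↓reduceIte] using leAux_refl x a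

lemma leAux_of_prefix : ∀ {p n : List Chir} (last : Chir), p <+: n → leAux last n p
  | [], _, _, _ => by simp only [leAux]
  | x :: p, _, _, ⟨t, rfl⟩ => by
    simpa only [List.cons_append, leAux, ↓reduceIte] using
      leAux_of_prefix (p := p) (n := p ++ t) x ⟨t, rfl⟩

lemma leAux_append : ∀ (p : List Chir) (last : Chir) {a b : List Chir},
    leAux (p.getLast?.getD last) a b → leAux last (p ++ a) (p ++ b)
  | [], _, _, _, h => h
  | z :: q, last, a, b, h => by
    have hlast : (z :: q).getLast?.getD last = q.getLast?.getD z := by cases q <;> rfl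
    simpa only [List.cons_append, leAux, ↓reduceIte] using leAux_append q z (hlast ▸ h)

lemma leAux_replicate : ∀ (k : ℕ) (c : Chir) {t : List Chir},
    (∀ x : Chir, ¬ (List.replicate k c ++ [x]) <+: t) → leAux c (List.replicate k c) t
  | _, _, [], _ => by simp only [leAux]
  | 0, _, y :: t, h => absurd ⟨t, rfl⟩ (h y)
  | k + 1, c, y :: t, h => by
    rw [List.replicate_succ]
    by_cases hy : c = y
    · subst hy
      simp only [leAux, ↓reduceIte]
      refine leAux_replicate k c fun x ⟨r, hr⟩ => h x ⟨r, ?_⟩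
      simp [List.replicate_succ, ← hr]
    · simp only [leAux, if_neg hy]

namespace MergeTree

variable (T : MergeTree)

lemma mem_nodes_of_prefix {n : List Chir} (hn : n ∈ T.nodes) {w : List Chir} (hw : w <+: n) :
    w ∈ T.nodes := by
  induction n using List.reverseRecOn with
  | nil => rwa [List.prefix_nil.mp hw]
  | append_singleton m x ih =>
    rcases List.prefix_concat_iff.mp hw with rfl | hw
    · exact hn
    · exact ih (T.prefix_closed m x hn) hw

lemma append_mem_nodes_iff {n : List Chir} (c : Chir) :
    n ++ [c] ∈ T.nodes ↔ n ++ [Chir.L] ∈ T.nodes := by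
  cases c
  · rfl
  · exact (T.full n).symm

lemma isLeaf_or_isInner {n : List Chir} (hn : n ∈ T.nodes) : T.IsLeaf n ∨ T.IsInner n :=
  (em _).elim (fun h => Or.inr ⟨hn, h⟩) (fun h => Or.inl ⟨hn, h⟩)

lemma isInner_of_append_mem {p t : List Chir} (ht : t ≠ []) (h : p ++ t ∈ T.nodes) :
    T.IsInner p := by
  obtain ⟨x, t, rfl⟩ := List.exists_cons_of_ne_nil ht
  have hx : p ++ [x] ∈ T.nodes := T.mem_nodes_of_prefix h ⟨t, by simp⟩
  exact ⟨T.mem_nodes_of_prefix hx (List.prefix_append _ _), (T.append_mem_nodes_iff x).mp hx⟩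

lemma ioLe_refl {n : List Chir} (hn : n ∈ T.nodes) : ioLe T n n :=
  Or.inr ⟨(T.isLeaf_or_isInner hn).imp (fun h => ⟨h, h⟩) (fun h => ⟨h, h⟩), leAux_refl _ _⟩

theorem ioLe_of_prefix {p n : List Chir} (hp : p ∈ T.nodes) (hn : n ∈ T.nodes) (hpn : p <+: n) :
    ioLe T n p := by
  obtain ⟨t, rfl⟩ := hpn
  rcases eq_or_ne t [] with rfl | ht
  · simpa using T.ioLe_refl hp
  have hpi : T.IsInner p := T.isInner_of_append_mem ht hn
  rcases T.isLeaf_or_isInner hn with hl | hi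
  · exact Or.inl ⟨hl, hpi⟩
  · exact Or.inr ⟨Or.inr ⟨hi, hpi⟩, leAux_of_prefix _ ⟨t, rfl⟩⟩

lemma exists_isLeaf_append_replicate {n : List Chir} (hn : n ∈ T.nodes) (c : Chir) :
    ∃ k, T.IsLeaf (n ++ List.replicate k c) := by
  by_contra! hnot
  have hmem : ∀ k, n ++ List.replicate k c ∈ T.nodes := by
    intro k
    induction k with
    | zero => simpa using hn
    | succ k ih =>
      have hinner := (T.isLeaf_or_isInner ih).resolve_left (hnot k)
      rw [List.replicate_succ', ← List.append_assoc]
      exact (T.append_mem_nodes_iff c).mpr hinner.2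
  have hlen := Finset.le_sup (f := List.length) (hmem (T.nodes.sup List.length + 1))
  simp only [List.length_append, List.length_replicate] at hlen
  omega

theorem ioLe_of_isLeaf_append_replicate {p : List Chir} {k : ℕ}
    (hm : T.IsLeaf (p ++ List.replicate k (chir p))) {n : List Chir} (hn : n ∈ T.nodes)
    (hpn : p <+: n) : ioLe T (p ++ List.replicate k (chir p)) n := by
  rcases T.isLeaf_or_isInner hn with hnl | hni
  · obtain ⟨t, rfl⟩ := hpn
    refine Or.inr ⟨Or.inl ⟨hm, hnl⟩, leAux_append p Chir.L (leAux_replicate k _ ?_)⟩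
    rintro x ⟨r, hr⟩
    have hx : p ++ List.replicate k (chir p) ++ [x] ∈ T.nodes :=
      T.mem_nodes_of_prefix hnl.1 ⟨r, by simp [chir, ← hr]⟩
    exact hm.2 ((T.append_mem_nodes_iff x).mp hx)
  · exact Or.inl ⟨hm, hni⟩

end MergeTree

/-- The index Morse order is a Morse order: on every subtree (the set of nodes with a
given prefix `p`) it attains its maximum at the root `p` of the subtree, and its
minimum inside the subtree rooted at the child of `p` of the same chirality as `p`. -/
theorem stmt5 (T : MergeTree) :
    (∀ p ∈ T.nodes, ∀ n ∈ T.nodes, p <+: n → ioLe T n p) ∧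
    (∀ p : List Chir, T.IsInner p → ∃ m ∈ T.nodes, (p ++ [chir p]) <+: m ∧
        ∀ n ∈ T.nodes, p <+: n → ioLe T m n) := by
  refine ⟨fun p hp n hn hpn => T.ioLe_of_prefix hp hn hpn, fun p hp => ?_⟩
  have hchild : p ++ [chir p] ∈ T.nodes := (T.append_mem_nodes_iff _).mpr hp.2
  obtain ⟨k, hleaf⟩ := T.exists_isLeaf_append_replicate hchild (chir p)
  have hword :
      p ++ [chir p] ++ List.replicate k (chir p) = p ++ List.replicate (k + 1) (chir p) := by
    simp [List.replicate_succ]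
  rw [hword] at hleaf
  refine ⟨_, hleaf.1, ⟨List.replicate k (chir p), hword⟩, fun n hn hpn => ?_⟩
  exact T.ioLe_of_isLeaf_append_replicate hleaf hn hpn
end

section
/- Subtrees of a merge tree T form intervals with respect to the sublevel-connected Morse order: if T' is a subtree of T, then the set of nodes of T' is an interval in the totally ordered set (V(T), ≤_sc). -/
theorem leAux_cons_cons_of_ne {last c d : Chir} (a b : List Chir) (h : c ≠ d) :
    leAux last (c :: a) (d :: b) ↔ c = last := by
  simp only [leAux, if_neg h]

theorem exists_cons_of_leAux_cons {last c : Chir} {x y z : List Chir}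
    (hxz : leAux last (c :: x) z) (hzy : leAux last z (c :: y)) :
    ∃ z', z = c :: z' ∧ leAux c x z' ∧ leAux c z' y := by
  match z with
  | [] => simp [leAux] at hzy
  | d :: z' =>
    by_cases hcd : c = d
    · subst hcd
      simp only [leAux, if_pos] at hxz hzy
      exact ⟨z', rfl, hxz, hzy⟩
    · rw [leAux_cons_cons_of_ne _ _ hcd] at hxz
      rw [leAux_cons_cons_of_ne _ _ (Ne.symm hcd)] at hzy
      exact absurd (hxz.trans hzy.symm) hcd

theorem prefix_of_leAux_append {p : List Chir} :
    ∀ {last : Chir} {x y z : List Chir},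
      leAux last (p ++ x) z → leAux last z (p ++ y) → p <+: z := by
  induction p with
  | nil => exact fun _ _ => List.nil_prefix
  | cons c p ih =>
    intro last x y z hxz hzy
    obtain ⟨z', rfl, hxz', hzy'⟩ := exists_cons_of_leAux_cons hxz hzy
    exact (List.prefix_cons_inj c).mpr (ih hxz' hzy')

theorem stmt8_general (T : MergeTree) (p : List Chir) :
    ∀ x ∈ T.nodes, ∀ y ∈ T.nodes, ∀ z ∈ T.nodes,
      p <+: x → p <+: y → scLe x z → scLe z y → p <+: z := by
  rintro x - y - z - ⟨x', rfl⟩ ⟨y', rfl⟩ hxz hzy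
  exact prefix_of_leAux_append hxz hzy

/-- Subtrees of a merge tree form intervals with respect to the sublevel-connected
Morse order. -/
theorem stmt8 (T : MergeTree) (p : List Chir) (hp : p ∈ T.nodes) :
    ∀ x ∈ T.nodes, ∀ y ∈ T.nodes, ∀ z ∈ T.nodes,
      p <+: x → p <+: y → scLe x z → scLe z y → p <+: z :=
  stmt8_general T p
end

section
/- For any Morse order ≤ on a merge tree T, the induced function f_λ := λ ∘ φ on a path P with i(T) 1-simplices (where λ is the Morse labeling induced by ≤ and φ is the order isomorphism from simplices of P to nodes of T) is a discrete Morse function on P all of whose cells are critical. -/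
/-- A Morse order on a merge tree: a total order on the nodes that attains its maximum
at the root of each subtree and its minimum inside the child-subtree matching the
chirality of the root of the subtree. -/
def IsMorseOrder (T : MergeTree) (r : List Chir → List Chir → Prop) : Prop :=
  (∀ a ∈ T.nodes, r a a) ∧
  (∀ a ∈ T.nodes, ∀ b ∈ T.nodes, r a b → r b a → a = b) ∧
  (∀ a ∈ T.nodes, ∀ b ∈ T.nodes, ∀ c ∈ T.nodes, r a b → r b c → r a c) ∧
  (∀ a ∈ T.nodes, ∀ b ∈ T.nodes, r a b ∨ r b a) ∧
  (∀ p ∈ T.nodes, ∀ n ∈ T.nodes, p <+: n → r n p) ∧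
  (∀ p : List Chir, T.IsInner p → ∃ m ∈ T.nodes, (p ++ [chir p]) <+: m ∧
      ∀ n ∈ T.nodes, p <+: n → r m n)

/-- The Morse labeling induced by an order `r`: the unique order isomorphism from the
nodes of `T` onto `{0, 1, …, 2·i(T)}`. -/
def IsMorseLabeling (T : MergeTree) (r : List Chir → List Chir → Prop)
    (lab : List Chir → ℕ) : Prop :=
  (∀ n ∈ T.nodes, lab n < 2 * T.innerCount + 1) ∧
  (∀ k : ℕ, k < 2 * T.innerCount + 1 → ∃ n ∈ T.nodes, lab n = k) ∧
  (∀ a ∈ T.nodes, ∀ b ∈ T.nodes, lab a = lab b → a = b) ∧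
  (∀ a ∈ T.nodes, ∀ b ∈ T.nodes, (r a b ↔ lab a ≤ lab b))

/-- An order-preserving bijection from the simplices of a path with `i(T)` 1-simplices
(concretely: `Fin (2·i(T)+1)` with its linear order, which is the simplex order coming
from an orientation) to the nodes of `T` with the simplex order. -/
def IsSimplexIso (T : MergeTree) (φ : Fin (2 * T.innerCount + 1) → List Chir) : Prop :=
  (∀ i, φ i ∈ T.nodes) ∧
  (∀ n ∈ T.nodes, ∃ i, φ i = n) ∧
  (∀ i j, i ≤ j ↔ simpLe (φ i) (φ j))

/-- A discrete Morse function, with only critical cells, on a path whose simplices are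
listed left to right as `Fin N` (even indices are vertices, odd indices are edges):
injective and weakly increasing from a vertex to an incident edge. -/
def IsPathDMFallCrit {N : ℕ} {α : Type*} [LinearOrder α] (f : Fin N → α) : Prop :=
  Function.Injective f ∧
  ∀ j : ℕ, ∀ h : 2 * j + 2 < N,
    f ⟨2 * j, by omega⟩ ≤ f ⟨2 * j + 1, by omega⟩ ∧
    f ⟨2 * j + 2, by omega⟩ ≤ f ⟨2 * j + 1, by omega⟩

/-! Two consecutive simplices of the path are a leaf and one of its ancestors (no node of `T`
lies between them in the simplex order). Hence the vertices of the path are the leaves of `T`,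
and each edge is an inner node having its left vertex in its left subtree and its right vertex
in its right subtree. A Morse order puts the root of every subtree above the subtree, so
the value of an edge dominates the values of its two vertices; injectivity holds because `lab`
and `φ` are bijections. -/

theorem MergeTree.mem_of_prefix {T : MergeTree} {u v : List Chir} (hv : v ∈ T.nodes)
    (huv : u <+: v) : u ∈ T.nodes := by
  induction v using List.reverseRecOn with
  | nil => rwa [List.prefix_nil.mp huv]
  | append_singleton w x ih =>
    rcases List.prefix_concat_iff.mp huv with rfl | huw
    · exact hv
    · exact ih (T.prefix_closed w x hv) huw

theorem MergeTree.IsLeaf.not_append_prefix {T : MergeTree} {a b : List Chir} (ha : T.IsLeaf a)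
    (hb : b ∈ T.nodes) (x : Chir) : ¬ a ++ [x] <+: b := by
  intro hab
  have hax := MergeTree.mem_of_prefix hb hab
  cases x
  · exact ha.2 hax
  · exact ha.2 ((T.full a).mpr hax)

theorem List.not_append_singleton_prefix_of_prefix {α : Type*} {l m : List α} (h : m <+: l)
    (x : α) : ¬ l ++ [x] <+: m := by
  intro h'
  have := (h'.trans h).length_le
  simp at this

namespace IsSimplexIso

variable {T : MergeTree} {φ : Fin (2 * T.innerCount + 1) → List Chir}

theorem injective (hφ : IsSimplexIso T φ) : Function.Injective φ := fun i j hij =>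
  le_antisymm ((hφ.2.2 i j).mpr (Or.inl hij)) ((hφ.2.2 j i).mpr (Or.inl hij.symm))

theorem eq_or_eq_of_simpLe_of_simpLe (hφ : IsSimplexIso T φ) {i j : Fin (2 * T.innerCount + 1)}
    (hij : (j : ℕ) = i + 1) {m : List Chir} (hm : m ∈ T.nodes) (him : simpLe (φ i) m)
    (hmj : simpLe m (φ j)) : m = φ i ∨ m = φ j := by
  obtain ⟨k, rfl⟩ := hφ.2.1 m hm
  have hik : (i : ℕ) ≤ k := (hφ.2.2 i k).mpr him
  have hkj : (k : ℕ) ≤ j := (hφ.2.2 k j).mpr hmj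
  rcases Nat.le_add_one_iff.mp (hij ▸ hkj) with hk | hk
  · exact Or.inl (congrArg φ (Fin.ext (le_antisymm hk hik)))
  · exact Or.inr (congrArg φ (Fin.ext (hk.trans hij.symm)))

theorem consecutive (hφ : IsSimplexIso T φ) {i j : Fin (2 * T.innerCount + 1)}
    (hij : (j : ℕ) = i + 1) :
    (φ j ++ [Chir.L] <+: φ i ∧ T.IsLeaf (φ i)) ∨
      (φ i ++ [Chir.R] <+: φ j ∧ T.IsLeaf (φ j)) := by
  have hi := hφ.1 i
  have hj := hφ.1 j
  have between : ∀ {m}, m ∈ T.nodes → simpLe (φ i) m → simpLe m (φ j) → m = φ i ∨ m = φ j :=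
    hφ.eq_or_eq_of_simpLe_of_simpLe hij
  -- Otherwise the right child of `φ i`, the left child of `φ j`, or the branching node `p`
  -- would lie strictly between `φ i` and `φ j`.
  rcases (hφ.2.2 i j).mp (Fin.le_def.mpr (by omega)) with heq | hji | hiRj | ⟨p, hpi, hpj⟩
  · exact absurd (hφ.injective heq) (Fin.ne_of_val_ne (by omega))
  · refine Or.inl ⟨hji, hi, fun hiL => ?_⟩
    have hiR := (T.full (φ i)).mp hiL
    rcases between hiR (Or.inr (Or.inr (Or.inl List.prefix_rfl)))
        (Or.inr (Or.inl (hji.trans (List.prefix_append _ _)))) with h | h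
    · simpa using congrArg List.length h
    · exact List.not_append_singleton_prefix_of_prefix (h ▸ List.prefix_append _ _) Chir.L hji
  · refine Or.inr ⟨hiRj, hj, fun hjL => ?_⟩
    rcases between hjL (Or.inr (Or.inr (Or.inl (hiRj.trans (List.prefix_append _ _)))))
        (Or.inr (Or.inl List.prefix_rfl)) with h | h
    · exact List.not_append_singleton_prefix_of_prefix (h ▸ List.prefix_append _ _) Chir.R hiRj
    · simpa using congrArg List.length h
  · have hp := T.prefix_closed p Chir.L (MergeTree.mem_of_prefix hi hpi)
    rcases between hp (Or.inr (Or.inl hpi)) (Or.inr (Or.inr (Or.inl hpj))) with rfl | rfl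
    · exact absurd hpi (List.not_append_singleton_prefix_of_prefix List.prefix_rfl Chir.L)
    · exact absurd hpj (List.not_append_singleton_prefix_of_prefix List.prefix_rfl Chir.R)

theorem isLeaf_zero (hφ : IsSimplexIso T φ) : T.IsLeaf (φ 0) := by
  refine ⟨hφ.1 0, fun h0L => ?_⟩
  obtain ⟨k, hk⟩ := hφ.2.1 _ h0L
  have hk0 : k ≤ 0 := (hφ.2.2 k 0).mpr (hk ▸ Or.inr (Or.inl List.prefix_rfl))
  rw [nonpos_iff_eq_zero.mp hk0] at hk
  simpa using congrArg List.length hk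

theorem succ_separates_of_isLeaf (hφ : IsSimplexIso T φ) {i j k : Fin (2 * T.innerCount + 1)}
    (hij : (j : ℕ) = i + 1) (hjk : (k : ℕ) = j + 1) (hi : T.IsLeaf (φ i)) :
    φ j ++ [Chir.L] <+: φ i ∧ φ j ++ [Chir.R] <+: φ k ∧ T.IsLeaf (φ k) := by
  obtain ⟨hji, -⟩ := (hφ.consecutive hij).resolve_right
    fun h => hi.not_append_prefix (hφ.1 j) Chir.R h.1
  have hj_not_leaf : ¬ T.IsLeaf (φ j) := fun hj => hj.2 (MergeTree.mem_of_prefix (hφ.1 i) hji)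
  obtain ⟨hjk, hk⟩ := (hφ.consecutive hjk).resolve_left fun h => hj_not_leaf h.2
  exact ⟨hji, hjk, hk⟩

theorem isLeaf_even (hφ : IsSimplexIso T φ) (j : ℕ) (h : 2 * j < 2 * T.innerCount + 1) :
    T.IsLeaf (φ ⟨2 * j, h⟩) := by
  induction j with
  | zero => exact hφ.isLeaf_zero
  | succ j ih =>
    exact (hφ.succ_separates_of_isLeaf (i := ⟨2 * j, by omega⟩) (j := ⟨2 * j + 1, by omega⟩) rfl
      (by simp only; omega) (ih (by omega))).2.2

end IsSimplexIso

theorem IsMorseLabeling.le_of_prefix {T : MergeTree} {r : List Chir → List Chir → Prop}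
    {lab : List Chir → ℕ} (hlab : IsMorseLabeling T r lab) (hr : IsMorseOrder T r)
    {p n : List Chir} (hp : p ∈ T.nodes) (hn : n ∈ T.nodes) (hpn : p <+: n) : lab n ≤ lab p :=
  (hlab.2.2.2 n hn p hp).mp (hr.2.2.2.2.1 p hp n hn hpn)

/-- For any Morse order on a merge tree `T`, the induced function `f = lab ∘ φ` on a
path with `i(T)` 1-simplices is a discrete Morse function all of whose cells are
critical. -/
theorem stmt10 (T : MergeTree) (r : List Chir → List Chir → Prop)
    (hr : IsMorseOrder T r) (lab : List Chir → ℕ) (hlab : IsMorseLabeling T r lab)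
    (φ : Fin (2 * T.innerCount + 1) → List Chir) (hφ : IsSimplexIso T φ) :
    IsPathDMFallCrit fun i => lab (φ i) := by
  refine ⟨fun i j hij => hφ.injective (hlab.2.2.1 _ (hφ.1 i) _ (hφ.1 j) hij), fun j h => ?_⟩
  obtain ⟨hleft, hright, -⟩ := hφ.succ_separates_of_isLeaf (i := ⟨2 * j, by omega⟩)
    (j := ⟨2 * j + 1, by omega⟩) (k := ⟨2 * j + 2, by omega⟩) rfl rfl (hφ.isLeaf_even j (by omega))
  exact ⟨hlab.le_of_prefix hr (hφ.1 _) (hφ.1 _) ((List.prefix_append _ _).trans hleft),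
    hlab.le_of_prefix hr (hφ.1 _) (hφ.1 _) ((List.prefix_append _ _).trans hright)⟩
end
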